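/- Let q ≥ 1, let Λ_1 ≥ Λ_2 ≥ ... ≥ Λ_q > 0 be real numbers, let r be the Witsenhausen index of (Λ_1,...,Λ_q), and let μ := (1/r)(1 + Σ_{j=1}^r 1/Λ_j). Then for every vector (p_1,...,p_q) of nonnegative real numbers with Σ_{i=1}^q p_i ≤ 1, one has Π_{i=1}^q (1 + Λ_i p_i) ≤ Π_{i=1}^r (μ Λ_i). -/

import Mathlib

/-!
Each factor is bounded by the tangent line of `exp` at `1`. For an active channel (`i ≤ r`),
`1 + Λᵢ pᵢ = μ Λᵢ y` with `y = (1/Λᵢ + pᵢ)/μ ≤ exp (y - 1)`; for an inactive one (`i > r`),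
`Λᵢ ≤ 1/μ` gives `1 + Λᵢ pᵢ ≤ exp (pᵢ/μ)`. Multiplying, the exponents add up to
`(∑ pᵢ - 1)/μ ≤ 0`, because `r μ = 1 + ∑_{i ≤ r} 1/Λᵢ`. The inactive bound `μ ≤ 1/Λᵢ` comes from the
Witsenhausen inequality at `r + 1` and the ordering of the `Λᵢ`.
-/

open Finset

lemma one_add_mul_le_mul_mul_exp {a μ : ℝ} (ha : 0 < a) (hμ : 0 < μ) (x : ℝ) :
    1 + a * x ≤ μ * a * Real.exp (x / μ + (1 / (μ * a) - 1)) := by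
  have hexponent : x / μ + (1 / (μ * a) - 1) = (1 / a + x) / μ - 1 := by field_simp; ring
  calc 1 + a * x = μ * a * ((1 / a + x) / μ - 1 + 1) := by field_simp; ring
    _ ≤ μ * a * Real.exp (x / μ + (1 / (μ * a) - 1)) := by
      rw [hexponent]; gcongr; exact Real.add_one_le_exp _

lemma one_add_mul_le_exp {a μ x : ℝ} (ha : 0 ≤ a) (hμ : 0 < μ) (hμa : μ ≤ 1 / a) (hx : 0 ≤ x) :
    1 + a * x ≤ Real.exp (x / μ) := by
  have haμ : a * μ ≤ 1 := by
    rcases ha.eq_or_lt with rfl | hapos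
    · simp
    · rwa [le_div_iff₀ hapos, mul_comm] at hμa
  have hax : a * x ≤ x / μ := by rw [le_div_iff₀ hμ]; nlinarith
  linarith [Real.add_one_le_exp (x / μ)]

theorem Finset.prod_one_add_mul_le_prod_mul {ι : Type*} [DecidableEq ι] {s t : Finset ι}
    {Λ p : ι → ℝ} {μ : ℝ} (hst : s ⊆ t) (hpos : ∀ i ∈ s, 0 < Λ i)
    (hnonneg : ∀ i ∈ t \ s, 0 ≤ Λ i) (hfloor : ∀ i ∈ t \ s, μ ≤ 1 / Λ i)
    (hμ : #s * μ = 1 + ∑ i ∈ s, 1 / Λ i) (hp : ∀ i ∈ t, 0 ≤ p i) (hsum : ∑ i ∈ t, p i ≤ 1) :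
    ∏ i ∈ t, (1 + Λ i * p i) ≤ ∏ i ∈ s, (μ * Λ i) := by
  have hμpos : 0 < μ := by
    have : 0 < (#s : ℝ) * μ := by
      rw [hμ]
      exact add_pos_of_pos_of_nonneg one_pos
        (sum_nonneg fun i hi => (one_div_pos.2 (hpos i hi)).le)
    exact pos_of_mul_pos_right this (Nat.cast_nonneg _)
  have hexp : ∑ i ∈ s, (p i / μ + (1 / (μ * Λ i) - 1)) + ∑ i ∈ t \ s, p i / μ ≤ 0 := by
    have hinv : ∀ i ∈ s, 1 / (μ * Λ i) = 1 / Λ i / μ := fun i _ => by rw [div_div, mul_comm]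
    rw [sum_add_distrib, sum_sub_distrib, sum_congr rfl hinv, ← sum_div, ← sum_div, ← sum_div,
      sum_const, nsmul_one, eq_sub_of_add_eq' hμ.symm]
    calc _ = (∑ i ∈ t, p i - 1) / μ := by rw [← sum_sdiff hst]; field_simp; ring
      _ ≤ 0 := div_nonpos_of_nonpos_of_nonneg (by linarith) hμpos.le
  calc ∏ i ∈ t, (1 + Λ i * p i)
      = (∏ i ∈ t \ s, (1 + Λ i * p i)) * ∏ i ∈ s, (1 + Λ i * p i) := (prod_sdiff hst).symm
    _ ≤ (∏ i ∈ t \ s, Real.exp (p i / μ)) *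
          ∏ i ∈ s, (μ * Λ i * Real.exp (p i / μ + (1 / (μ * Λ i) - 1))) := by
      have hfactor : ∀ i ∈ t, 0 ≤ 1 + Λ i * p i := fun i hi => by
        have : 0 ≤ Λ i := if h : i ∈ s then (hpos i h).le else hnonneg i (mem_sdiff.2 ⟨hi, h⟩)
        have := hp i hi
        positivity
      refine mul_le_mul (prod_le_prod (fun i hi => hfactor i (sdiff_subset hi))
          fun i hi => one_add_mul_le_exp (hnonneg i hi) hμpos (hfloor i hi) (hp i (sdiff_subset hi)))
        (prod_le_prod (fun i hi => hfactor i (hst hi))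
          fun i hi => one_add_mul_le_mul_mul_exp (hpos i hi) hμpos _)
        (prod_nonneg fun i hi => hfactor i (hst hi)) (prod_nonneg fun i _ => (Real.exp_pos _).le)
    _ = (∏ i ∈ s, (μ * Λ i)) *
          Real.exp (∑ i ∈ s, (p i / μ + (1 / (μ * Λ i) - 1)) + ∑ i ∈ t \ s, p i / μ) := by
      rw [prod_mul_distrib, Real.exp_add, Real.exp_sum, Real.exp_sum]; ring
    _ ≤ ∏ i ∈ s, (μ * Λ i) := by
      have : 0 ≤ ∏ i ∈ s, (μ * Λ i) := prod_nonneg fun i hi => (mul_pos hμpos (hpos i hi)).le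
      nlinarith [Real.exp_le_one_iff.2 hexp]

noncomputable def waterLevel (Λ : ℕ → ℝ) (k : ℕ) : ℝ := 1 / (k : ℝ) * (1 + ∑ j ∈ Icc 1 k, 1 / Λ j)

lemma natCast_mul_waterLevel (Λ : ℕ → ℝ) {k : ℕ} (hk : 0 < k) :
    k * waterLevel Λ k = 1 + ∑ j ∈ Icc 1 k, 1 / Λ j := by
  have : (k : ℝ) ≠ 0 := by positivity
  rw [waterLevel]
  field_simp

lemma waterLevel_le_of_waterLevel_add_one_le {Λ : ℕ → ℝ} {k : ℕ} (hk : 0 < k)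
    (h : waterLevel Λ (k + 1) ≤ 1 / Λ (k + 1)) : waterLevel Λ k ≤ 1 / Λ (k + 1) := by
  have hk' : (0 : ℝ) < k := by positivity
  rw [waterLevel, sum_Icc_succ_top (by omega), one_div_mul_eq_div, div_le_iff₀ (by positivity)] at h
  rw [waterLevel, one_div_mul_eq_div, div_le_iff₀ hk']
  push_cast at h
  linarith

theorem waterfilling_optimal_general
    (q : ℕ) (Λ : ℕ → ℝ)
    (hpos : ∀ k, 1 ≤ k → k ≤ q → 0 < Λ k)
    (hmono : ∀ k, 1 ≤ k → k + 1 ≤ q → Λ (k + 1) ≤ Λ k)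
    (r : ℕ) (hr1 : 1 ≤ r) (hrq : r ≤ q)
    (hdown : ∀ k, r < k → k ≤ q →
      (1 / (k : ℝ)) * (1 + ∑ j ∈ Finset.Icc 1 k, 1 / Λ j) ≤ 1 / Λ k)
    (μ : ℝ) (hμ : μ = (1 / (r : ℝ)) * (1 + ∑ j ∈ Finset.Icc 1 r, 1 / Λ j))
    (p : ℕ → ℝ) (hpnn : ∀ i, 1 ≤ i → i ≤ q → 0 ≤ p i)
    (hpsum : ∑ i ∈ Finset.Icc 1 q, p i ≤ 1) :
    ∏ i ∈ Finset.Icc 1 q, (1 + Λ i * p i) ≤ ∏ i ∈ Finset.Icc 1 r, (μ * Λ i) := by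
  have hμr : (#(Icc 1 r) : ℝ) * μ = 1 + ∑ j ∈ Icc 1 r, 1 / Λ j := by
    rw [Nat.card_Icc, Nat.add_sub_cancel, hμ]
    exact natCast_mul_waterLevel Λ hr1
  have hanti : AntitoneOn Λ (Set.Icc 1 q) :=
    antitoneOn_of_add_one_le Set.ordConnected_Icc fun k _ hk hk1 => hmono k hk.1 hk1.2
  have hfloor : ∀ i ∈ Icc 1 q \ Icc 1 r, μ ≤ 1 / Λ i := by
    intro i hi
    simp only [mem_sdiff, mem_Icc, not_and, not_le] at hi
    have hri : r < i := hi.2 hi.1.1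
    calc μ ≤ 1 / Λ (r + 1) :=
          hμ ▸ waterLevel_le_of_waterLevel_add_one_le hr1 (hdown (r + 1) (by omega) (by omega))
      _ ≤ 1 / Λ i := one_div_le_one_div_of_le (hpos i hi.1.1 hi.1.2)
          (hanti ⟨by omega, by omega⟩ ⟨hi.1.1, hi.1.2⟩ hri)
  have hΛ : ∀ i ∈ Icc 1 q, 0 < Λ i := fun i hi => hpos i (mem_Icc.1 hi).1 (mem_Icc.1 hi).2
  exact prod_one_add_mul_le_prod_mul (Icc_subset_Icc_right hrq)
    (fun i hi => hΛ i (Icc_subset_Icc_right hrq hi)) (fun i hi => (hΛ i (sdiff_subset hi)).le)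
    hfloor hμr (fun i hi => hpnn i (mem_Icc.1 hi).1 (mem_Icc.1 hi).2) hpsum

/-- **Optimality of the water-filling solution.** Given `Λ_1 ≥ ... ≥ Λ_q > 0` with
Witsenhausen index `r` and water level `μ`, every nonnegative power allocation
`(p_1, ..., p_q)` with `∑_{i=1}^q p_i ≤ 1` satisfies
`∏_{i=1}^q (1 + Λ_i p_i) ≤ ∏_{i=1}^r (μ Λ_i)`. -/
theorem waterfilling_optimal
    (q : ℕ) (hq : 1 ≤ q) (Λ : ℕ → ℝ)
    (hpos : ∀ k, 1 ≤ k → k ≤ q → 0 < Λ k)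
    (hmono : ∀ k, 1 ≤ k → k + 1 ≤ q → Λ (k + 1) ≤ Λ k)
    (r : ℕ) (hr1 : 1 ≤ r) (hrq : r ≤ q)
    (hup : ∀ k, 1 ≤ k → k ≤ r →
      1 / Λ k < (1 / (k : ℝ)) * (1 + ∑ j ∈ Finset.Icc 1 k, 1 / Λ j))
    (hdown : ∀ k, r < k → k ≤ q →
      (1 / (k : ℝ)) * (1 + ∑ j ∈ Finset.Icc 1 k, 1 / Λ j) ≤ 1 / Λ k)
    (μ : ℝ) (hμ : μ = (1 / (r : ℝ)) * (1 + ∑ j ∈ Finset.Icc 1 r, 1 / Λ j))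
    (p : ℕ → ℝ) (hpnn : ∀ i, 1 ≤ i → i ≤ q → 0 ≤ p i)
    (hpsum : ∑ i ∈ Finset.Icc 1 q, p i ≤ 1) :
    ∏ i ∈ Finset.Icc 1 q, (1 + Λ i * p i) ≤ ∏ i ∈ Finset.Icc 1 r, (μ * Λ i) :=
  waterfilling_optimal_general q Λ hpos hmono r hr1 hrq hdown μ hμ p hpnn hpsum
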